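/- Suppose ‖b_u‖ ≤ C₁ for all u ∈ T and Φ : T → ℂ is measurable. If the integral ∫_T Φ(u) f(V_u x + b_u) dμ(u) converges absolutely at some point x for the function f(y) = e^{−‖y‖²}, then Φ ∈ L¹(μ). In particular, the condition Φ ∈ L¹(μ) is necessary for the Hausdorff operator with kernel Φ and isometries A(u)(x) = V_u x + b_u with uniformly bounded translations to be well-defined on W^{1,p}(ℝⁿ). -/

import Mathlib

open MeasureTheory ENNReal Matrix

/-!
The Gaussian weight is bounded below uniformly in `u`: `V_u` is an isometry and `‖b_u‖ ≤ C₁`,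
so `‖V_u x + b_u‖ ≤ ‖x‖ + C₁` and `exp (-‖V_u x + b_u‖²) ≥ exp (-(‖x‖ + C₁)²) > 0`.
Hence `‖Φ‖` is dominated by a constant multiple of the integrable function `‖Φ‖ · exp (-‖V_u x + b_u‖²)`.
-/

theorem Matrix.norm_toEuclideanLin_of_conjTranspose_mul_self {𝕜 m : Type*} [RCLike 𝕜]
    [Fintype m] [DecidableEq m] {A : Matrix m m 𝕜} (hA : Aᴴ * A = 1)
    (x : EuclideanSpace 𝕜 m) : ‖toEuclideanLin A x‖ = ‖x‖ := by
  set U := toEuclideanCLM (𝕜 := 𝕜) A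
  have hadj : U.adjoint ∘L U = 1 := by
    rw [← ContinuousLinearMap.star_eq_adjoint, ← ContinuousLinearMap.mul_def, ← map_star,
      ← map_mul, star_eq_conjTranspose, hA, map_one]
  rw [← coe_toEuclideanCLM_eq_toEuclideanLin]
  exact U.norm_map_iff_adjoint_comp_self.mpr hadj x

theorem MeasureTheory.Integrable.of_norm_mul_of_le {T E : Type*} [MeasurableSpace T]
    {μ : Measure T} [NormedAddCommGroup E] {Φ : T → E} {w : T → ℝ} {c : ℝ} (hc : 0 < c)
    (hw : ∀ᵐ u ∂μ, c ≤ w u) (hΦ : AEStronglyMeasurable Φ μ)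
    (h : Integrable (fun u => ‖Φ u‖ * w u) μ) : Integrable Φ μ := by
  refine (h.const_mul c⁻¹).mono' hΦ ?_
  filter_upwards [hw] with u hu
  calc ‖Φ u‖ = c⁻¹ * (‖Φ u‖ * c) := by field_simp
    _ ≤ c⁻¹ * (‖Φ u‖ * w u) := by gcongr

/-- If `‖b_u‖ ≤ C₁` for all `u ∈ T` and the integral `∫_T Φ(u) f(V_u x + b_u) dμ(u)`
converges absolutely at some point `x` for the Gaussian `f y = exp (−‖y‖²)`, then
`Φ ∈ L¹(μ)`.  Hence the condition `Φ ∈ L¹(μ)` is necessary for the Hausdorff operator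
with uniformly bounded translations to be well defined on `W^{1,p}(ℝⁿ)`. -/
theorem integrable_of_gaussian_hausdorff_converges (n : ℕ)
    {T : Type*} [MeasurableSpace T] (μ : Measure T)
    (Φ : T → ℂ) (hΦm : AEStronglyMeasurable Φ μ)
    (V : T → Matrix (Fin n) (Fin n) ℝ) (b : T → EuclideanSpace ℝ (Fin n))
    (hV : ∀ u, (V u)ᵀ * V u = 1)
    (C₁ : ℝ) (hb : ∀ u, ‖b u‖ ≤ C₁)
    (x : EuclideanSpace ℝ (Fin n))
    (habs : Integrable
      (fun u => ‖Φ u‖ * Real.exp (-‖Matrix.toEuclideanLin (V u) x + b u‖ ^ 2)) μ) :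
    Integrable Φ μ := by
  have hshift (u : T) : ‖toEuclideanLin (V u) x + b u‖ ≤ ‖x‖ + C₁ := by
    have hiso := norm_toEuclideanLin_of_conjTranspose_mul_self
      (by rw [conjTranspose_eq_transpose_of_trivial]; exact hV u) x
    calc ‖toEuclideanLin (V u) x + b u‖ ≤ ‖toEuclideanLin (V u) x‖ + ‖b u‖ := norm_add_le _ _
      _ ≤ ‖x‖ + C₁ := by rw [hiso]; gcongr; exact hb u
  refine habs.of_norm_mul_of_le (Real.exp_pos (-(‖x‖ + C₁) ^ 2)) (.of_forall fun u => ?_) hΦm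
  have := hshift u
  gcongr
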